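/- Let N ≥ 3, and let u : ℝ^N → ℝ be C¹ away from {x₁ = x₂ = 0}, invariant under rotations in the (x₁,x₂)-plane (i.e., u(x) depends only on r = √(x₁²+x₂²) and (x₃,…,x_N)). Define U : ℝ^N → ℝ^N by U(x) = (u(x)/r)(−x₂, x₁, 0, …, 0). Then div U = 0 and |∇U(x)|² = |∇u(x)|² + u(x)²/r² pointwise away from {r = 0}. -/

import Mathlib

open MeasureTheory

noncomputable section

/-- `r(x) = sqrt(x₁² + x₂²)` for `x ∈ ℝ^N`, `N ≥ 3`. -/
def rr (N : ℕ) (hN : 3 ≤ N) (x : EuclideanSpace ℝ (Fin N)) : ℝ :=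
  Real.sqrt (x ⟨0, by omega⟩ ^ 2 + x ⟨1, by omega⟩ ^ 2)

/-- The vector field `U(x) = (u(x)/r) (−x₂, x₁, 0, …, 0)`. -/
def Ufield (N : ℕ) (hN : 3 ≤ N) (u : EuclideanSpace ℝ (Fin N) → ℝ)
    (x : EuclideanSpace ℝ (Fin N)) : EuclideanSpace ℝ (Fin N) :=
  WithLp.toLp 2 (fun i => (u x / rr N hN x) *
    (if (i : ℕ) = 0 then -x ⟨1, by omega⟩ else if (i : ℕ) = 1 then x ⟨0, by omega⟩ else 0)
    : Fin N → ℝ)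

/-!
With `v = u / r`, the only nonzero components of `U` are `U₁ = -x₂ v` and `U₂ = x₁ v`, so
`∇U₁ = -v e₂ - x₂ ∇v` and `∇U₂ = v e₁ + x₁ ∇v`. Hence `div U = x₁ ∂₂v - x₂ ∂₁v` is the derivative
of `v` along the generator `(-x₂, x₁, 0, …)` of the rotations of the `(x₁, x₂)`-plane, and it
vanishes because `v` is constant on their orbits. For the energy, `∇u = r ∇v + v ∇r` with
`∇r = (x₁ e₁ + x₂ e₂) / r`, and expanding the squares in the inner product space gives
`|∇U₁|² + |∇U₂|² = |∇u|² + v²`.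
-/

open InnerProductSpace Real

section GradientCalculus

variable {F : Type*} [NormedAddCommGroup F] [InnerProductSpace ℝ F] [CompleteSpace F]
  {f g : F → ℝ} {f' g' x : F}

theorem HasGradientAt.norm_fderiv (h : HasGradientAt f f' x) : ‖fderiv ℝ f x‖ = ‖f'‖ := by
  rw [h.hasFDerivAt.fderiv, LinearIsometryEquiv.norm_map]

theorem HasGradientAt.mul (hf : HasGradientAt f f' x) (hg : HasGradientAt g g' x) :
    HasGradientAt (fun y => f y * g y) (f x • g' + g x • f') x := by
  rw [hasGradientAt_iff_hasFDerivAt] at *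
  simpa only [map_add, map_smulₛₗ, RCLike.conj_to_real] using hf.fun_mul hg

theorem hasGradientAt_inner_right (c x : F) : HasGradientAt (fun y => ⟪c, y⟫_ℝ) c x :=
  hasGradientAt_iff_hasFDerivAt.2 (toDual ℝ F c).hasFDerivAt

end GradientCalculus

theorem fderiv_apply_eq_zero_of_comp_eq_const {E : Type*} [NormedAddCommGroup E]
    [NormedSpace ℝ E] {u : E → ℝ} {c : ℝ → E} {x w : E} (hu : DifferentiableAt ℝ u x)
    (hc : HasDerivAt c w 0) (hc₀ : c 0 = x) (hconst : ∀ t, u (c t) = u x) :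
    fderiv ℝ u x w = 0 :=
  (hu.hasFDerivAt.comp_hasDerivAt_of_eq 0 hc hc₀.symm).unique <| by
    simpa only [Function.comp_def, hconst] using hasDerivAt_const (0 : ℝ) (u x)

theorem norm_sq_add_norm_sq_eq_of_orthonormal {F : Type*} [NormedAddCommGroup F]
    [InnerProductSpace ℝ F] {e₁ e₂ : F} (h₁ : ‖e₁‖ = 1) (h₂ : ‖e₂‖ = 1) (h₁₂ : ⟪e₁, e₂⟫_ℝ = 0) {α β r : ℝ}
    (hr : r ^ 2 = α ^ 2 + β ^ 2) (hr₀ : r ≠ 0) (w : ℝ) (g : F) :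
    ‖w • (-e₂) + (-β) • g‖ ^ 2 + ‖w • e₁ + α • g‖ ^ 2
      = ‖r • g + w • (r⁻¹ • (α • e₁ + β • e₂))‖ ^ 2 + w ^ 2 := by
  simp only [← real_inner_self_eq_norm_sq, inner_add_left, inner_add_right, inner_smul_left,
    inner_smul_right, inner_neg_left, inner_neg_right, real_inner_comm e₁ e₂, h₁₂]
  simp only [real_inner_self_eq_norm_sq, h₁, h₂, real_inner_comm e₁ g, real_inner_comm e₂ g,
    RCLike.conj_to_real]
  field_simp
  linear_combination (w ^ 2 - ‖g‖ ^ 2 * r ^ 2) * hr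

section PlaneRotation

variable {ι : Type*} [DecidableEq ι]

local notation "𝐞" i:max => EuclideanSpace.single i (1 : ℝ)

def planeProj (a b : ι) (x : EuclideanSpace ℝ ι) : EuclideanSpace ℝ ι :=
  x a • 𝐞 a + x b • 𝐞 b

def rotGen (a b : ι) (x : EuclideanSpace ℝ ι) : EuclideanSpace ℝ ι :=
  x a • 𝐞 b - x b • 𝐞 a

def planeRotation (a b : ι) (t : ℝ) (x : EuclideanSpace ℝ ι) : EuclideanSpace ℝ ι :=
  x + (cos t - 1) • planeProj a b x + sin t • rotGen a b x

variable {a b : ι} (t : ℝ) (x : EuclideanSpace ℝ ι)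

theorem planeRotation_apply_left (hab : a ≠ b) :
    planeRotation a b t x a = x a * cos t - x b * sin t := by
  simp only [planeRotation, planeProj, rotGen, smul_add, PiLp.add_apply, PiLp.sub_apply,
    PiLp.smul_apply, PiLp.single_eq_same, PiLp.single_eq_of_ne, ne_eq, hab,
    not_false_eq_true, smul_eq_mul]
  ring

theorem planeRotation_apply_right (hab : a ≠ b) :
    planeRotation a b t x b = x b * cos t + x a * sin t := by
  simp only [planeRotation, planeProj, rotGen, smul_add, PiLp.add_apply, PiLp.sub_apply,
    PiLp.smul_apply, PiLp.single_eq_same, PiLp.single_eq_of_ne, ne_eq, hab.symm,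
    not_false_eq_true, smul_eq_mul]
  ring

theorem planeRotation_apply_of_ne {i : ι} (ha : i ≠ a) (hb : i ≠ b) :
    planeRotation a b t x i = x i := by
  simp [planeRotation, planeProj, rotGen, ha, hb]

theorem hasDerivAt_planeRotation [Fintype ι] :
    HasDerivAt (fun t => planeRotation a b t x) (rotGen a b x) 0 := by
  have h := (((hasDerivAt_cos 0).sub_const 1).smul_const (planeProj a b x)).const_add x
    |>.fun_add ((hasDerivAt_sin 0).smul_const (rotGen a b x))
  simpa [planeRotation] using h

theorem planeRotation_zero : planeRotation a b 0 x = x := by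
  simp [planeRotation]

end PlaneRotation

section AxialField

def coord₁ {N : ℕ} (hN : 3 ≤ N) : Fin N := ⟨0, by omega⟩

def coord₂ {N : ℕ} (hN : 3 ≤ N) : Fin N := ⟨1, by omega⟩

variable {N : ℕ} (hN : 3 ≤ N)

local notation "c₁" => coord₁ hN
local notation "c₂" => coord₂ hN
local notation "𝐞" i:max => EuclideanSpace.single i (1 : ℝ)

theorem coord₁_ne_coord₂ : c₁ ≠ c₂ := by
  simp [coord₁, coord₂, Fin.ext_iff]

theorem rr_eq (x : EuclideanSpace ℝ (Fin N)) : rr N hN x = √(x c₁ ^ 2 + x c₂ ^ 2) := rfl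

theorem rr_sq (x : EuclideanSpace ℝ (Fin N)) : rr N hN x ^ 2 = x c₁ ^ 2 + x c₂ ^ 2 :=
  sq_sqrt (by positivity)

theorem rr_planeRotation (t : ℝ) (x : EuclideanSpace ℝ (Fin N)) :
    rr N hN (planeRotation c₁ c₂ t x) = rr N hN x := by
  rw [rr_eq, rr_eq, planeRotation_apply_left _ _ (coord₁_ne_coord₂ hN),
    planeRotation_apply_right _ _ (coord₁_ne_coord₂ hN)]
  congr 1
  linear_combination (x c₁ ^ 2 + x c₂ ^ 2) * sin_sq_add_cos_sq t

theorem apply_planeRotation_of_invariant {u : EuclideanSpace ℝ (Fin N) → ℝ}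
    (hinv : ∀ x x' : EuclideanSpace ℝ (Fin N), rr N hN x = rr N hN x' →
      (∀ i : Fin N, 2 ≤ (i : ℕ) → x i = x' i) → u x = u x')
    (t : ℝ) (x : EuclideanSpace ℝ (Fin N)) : u (planeRotation c₁ c₂ t x) = u x :=
  hinv _ _ (rr_planeRotation hN t x) fun i hi => planeRotation_apply_of_ne t x
    (by simp [coord₁, Fin.ext_iff]; omega) (by simp [coord₂, Fin.ext_iff]; omega)

theorem hasGradientAt_rr {x : EuclideanSpace ℝ (Fin N)} (hx : rr N hN x ≠ 0) :
    HasGradientAt (rr N hN) ((rr N hN x)⁻¹ • planeProj c₁ c₂ x) x := by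
  have hsq : x c₁ ^ 2 + x c₂ ^ 2 ≠ 0 := fun h => hx (by rw [rr_eq, h, sqrt_zero])
  have h₁ := (EuclideanSpace.proj (𝕜 := ℝ) c₁).hasFDerivAt (x := x)
  have h₂ := (EuclideanSpace.proj (𝕜 := ℝ) c₂).hasFDerivAt (x := x)
  have h : HasFDerivAt (rr N hN) _ x := ((h₁.pow 2).fun_add (h₂.pow 2)).sqrt hsq
  rw [hasGradientAt_iff_hasFDerivAt]
  refine h.congr_fderiv ?_
  ext y
  simp only [planeProj, ← rr_eq, PiLp.proj_apply, Nat.add_one_sub_one, pow_one, nsmul_eq_mul,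
    Nat.cast_ofNat, smul_add, add_apply, smul_apply, smul_eq_mul, map_add, map_smul,
    toDual_apply_apply, EuclideanSpace.inner_single_left, ringHom_apply, one_mul]
  field_simp

theorem Ufield_apply_coord₁ (u : EuclideanSpace ℝ (Fin N) → ℝ) (y : EuclideanSpace ℝ (Fin N)) :
    Ufield N hN u y c₁ = u y / rr N hN y * ⟪-𝐞 c₂, y⟫_ℝ := by
  simp [Ufield, coord₁, coord₂, EuclideanSpace.inner_single_left]

theorem Ufield_apply_coord₂ (u : EuclideanSpace ℝ (Fin N) → ℝ) (y : EuclideanSpace ℝ (Fin N)) :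
    Ufield N hN u y c₂ = u y / rr N hN y * ⟪𝐞 c₁, y⟫_ℝ := by
  simp [Ufield, coord₁, coord₂, EuclideanSpace.inner_single_left]

variable {u : EuclideanSpace ℝ (Fin N) → ℝ} {x g : EuclideanSpace ℝ (Fin N)}

theorem fderiv_Ufield_of_ne {i : Fin N} (h₁ : i ≠ c₁) (h₂ : i ≠ c₂) :
    fderiv ℝ (fun y => Ufield N hN u y i) x = 0 := by
  simp only [coord₁, coord₂, ne_eq, Fin.ext_iff] at h₁ h₂
  simp [Ufield, h₁, h₂]

theorem differentiableAt_div_rr (hu : DifferentiableAt ℝ u x) (hx : rr N hN x ≠ 0) :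
    DifferentiableAt ℝ (fun y => u y / rr N hN y) x := by
  simpa only [div_eq_mul_inv] using
    hu.fun_mul ((hasGradientAt_rr hN hx).differentiableAt.fun_inv hx)

theorem hasGradientAt_Ufield_coord₁ (hg : HasGradientAt (fun y => u y / rr N hN y) g x) :
    HasGradientAt (fun y => Ufield N hN u y c₁)
      ((u x / rr N hN x) • -𝐞 c₂ + (-x c₂) • g) x := by
  have h := hg.mul (hasGradientAt_inner_right (-𝐞 c₂) x)
  rw [show ⟪-𝐞 c₂, x⟫_ℝ = -x c₂ by simp [EuclideanSpace.inner_single_left]] at h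
  exact h.congr_of_eventuallyEq (.of_forall fun y => Ufield_apply_coord₁ hN u y)

theorem hasGradientAt_Ufield_coord₂ (hg : HasGradientAt (fun y => u y / rr N hN y) g x) :
    HasGradientAt (fun y => Ufield N hN u y c₂) ((u x / rr N hN x) • 𝐞 c₁ + x c₁ • g) x := by
  have h := hg.mul (hasGradientAt_inner_right (𝐞 c₁) x)
  rw [show ⟪𝐞 c₁, x⟫_ℝ = x c₁ by simp [EuclideanSpace.inner_single_left]] at h
  exact h.congr_of_eventuallyEq (.of_forall fun y => Ufield_apply_coord₂ hN u y)

theorem hasGradientAt_of_div_rr (hx : rr N hN x ≠ 0)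
    (hg : HasGradientAt (fun y => u y / rr N hN y) g x) :
    HasGradientAt u
      (rr N hN x • g + (u x / rr N hN x) • ((rr N hN x)⁻¹ • planeProj c₁ c₂ x)) x := by
  have hr := hasGradientAt_rr hN hx
  refine (hr.mul hg).congr_of_eventuallyEq ?_
  filter_upwards [hr.continuousAt.eventually_ne hx] with y hy
  field_simp

theorem sum_fderiv_Ufield_apply_single (hu : DifferentiableAt ℝ u x) (hx : rr N hN x ≠ 0) :
    ∑ i, fderiv ℝ (fun y => Ufield N hN u y i) x (𝐞 i)
      = fderiv ℝ (fun y => u y / rr N hN y) x (rotGen c₁ c₂ x) := by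
  have hg := (differentiableAt_div_rr hN hu hx).hasGradientAt
  have hne := coord₁_ne_coord₂ hN
  rw [Fintype.sum_eq_add _ _ hne fun i hi => by simp [fderiv_Ufield_of_ne hN hi.1 hi.2],
    (hasGradientAt_Ufield_coord₁ hN hg).fderiv_apply,
    (hasGradientAt_Ufield_coord₂ hN hg).fderiv_apply, hg.fderiv_apply]
  simp only [rotGen, inner_add_left, inner_sub_right, inner_smul_left, inner_smul_right,
    inner_neg_left, smul_neg, neg_smul, ringHom_apply, EuclideanSpace.inner_single_right,
    PiLp.single_eq_of_ne, ne_eq, hne, hne.symm, not_false_eq_true, inner_gradient_left]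
  ring

theorem sum_norm_fderiv_Ufield_sq (hu : DifferentiableAt ℝ u x) (hx : rr N hN x ≠ 0) :
    ∑ i, ‖fderiv ℝ (fun y => Ufield N hN u y i) x‖ ^ 2
      = ‖fderiv ℝ u x‖ ^ 2 + u x ^ 2 / rr N hN x ^ 2 := by
  have hg := (differentiableAt_div_rr hN hu hx).hasGradientAt
  have hne := coord₁_ne_coord₂ hN
  rw [Fintype.sum_eq_add _ _ hne fun i hi => by simp [fderiv_Ufield_of_ne hN hi.1 hi.2],
    (hasGradientAt_Ufield_coord₁ hN hg).norm_fderiv,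
    (hasGradientAt_Ufield_coord₂ hN hg).norm_fderiv,
    (hasGradientAt_of_div_rr hN hx hg).norm_fderiv, ← div_pow]
  exact norm_sq_add_norm_sq_eq_of_orthonormal (by simp) (by simp)
    (by simp [EuclideanSpace.inner_single_left, hne]) (rr_sq hN x) hx _ _

end AxialField

theorem stmt11 (N : ℕ) (hN : 3 ≤ N) (u : EuclideanSpace ℝ (Fin N) → ℝ)
    (hreg : ∀ x, rr N hN x ≠ 0 → DifferentiableAt ℝ u x)
    (hinv : ∀ x x' : EuclideanSpace ℝ (Fin N), rr N hN x = rr N hN x' →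
      (∀ i : Fin N, 2 ≤ (i : ℕ) → x i = x' i) → u x = u x') :
    ∀ x, rr N hN x ≠ 0 →
      (∑ i : Fin N, fderiv ℝ (fun y => Ufield N hN u y i) x (EuclideanSpace.single i 1)) = 0
      ∧ (∑ i : Fin N, ‖fderiv ℝ (fun y => Ufield N hN u y i) x‖ ^ 2)
          = ‖fderiv ℝ u x‖ ^ 2 + u x ^ 2 / rr N hN x ^ 2 := by
  intro x hx
  refine ⟨?_, sum_norm_fderiv_Ufield_sq hN (hreg x hx) hx⟩
  rw [sum_fderiv_Ufield_apply_single hN (hreg x hx) hx]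
  exact fderiv_apply_eq_zero_of_comp_eq_const (differentiableAt_div_rr hN (hreg x hx) hx)
    (hasDerivAt_planeRotation x) (planeRotation_zero x) fun t => by
      simp only [apply_planeRotation_of_invariant hN hinv, rr_planeRotation]
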